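/- For every nonnegative integer n, the sum over k from 0 to n of (-1)^k · ((2k)!!/(2k+1)!!) · C(n,k) equals 1/(2n+1), where C(n,k) = n!/((n-k)! k!) is the binomial coefficient. -/

import Mathlib

open scoped Nat
open Finset Real intervalIntegral

/-!
Since `∫_{-1}^{1} (1 - u²)^k du = 2 (2k)‼ / (2k+1)‼` (Wallis), the sum is half the integral over
`[-1, 1]` of `∑_k C(n,k) (-(1 - u²))^k = (u²)^n`, that is `1 / (2n + 1)`.
-/

lemma sum_range_neg_one_pow_mul_pow_mul_choose {R : Type*} [CommRing R] (x : R) (n : ℕ) :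
    ∑ k ∈ range (n + 1), (-1) ^ k * x ^ k * (n.choose k : R) = (1 - x) ^ n := by
  rw [sub_eq_neg_add, add_pow]
  refine sum_congr rfl fun k _ => ?_
  rw [neg_pow x, one_pow, mul_one]

lemma doubleFactorial_two_mul_div_two_mul_add_one (k : ℕ) :
    ((2 * k)‼ : ℝ) / (2 * k + 1)‼ = ∏ i ∈ range k, (2 * (i : ℝ) + 2) / (2 * i + 3) := by
  induction k with
  | zero => simp
  | succ k ih =>
    rw [prod_range_succ, ← ih, show 2 * (k + 1) = 2 * k + 2 by ring, Nat.doubleFactorial_add_two,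
      show 2 * k + 2 + 1 = 2 * k + 1 + 2 by ring, Nat.doubleFactorial_add_two]
    push_cast
    field_simp
    ring

-- Wallis' integral `∫₀^π sin^(2k+1)` after the substitution `u = cos x`.
lemma integral_one_sub_sq_pow (k : ℕ) :
    ∫ u in (-1 : ℝ)..1, (1 - u ^ 2) ^ k = 2 * (((2 * k)‼ : ℝ) / (2 * k + 1)‼) := by
  have h := integral_sin_pow_odd_mul_cos_pow (a := 0) (b := π) k 0
  simp only [pow_zero, mul_one, one_mul, cos_pi, cos_zero, integral_sin_pow_odd] at h
  rw [← h, doubleFactorial_two_mul_div_two_mul_add_one]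

theorem alternating_doubleFactorial_sum (n : ℕ) :
    ∑ k ∈ Finset.range (n + 1),
        (-1 : ℝ) ^ k * (((2 * k)‼ : ℝ) / ((2 * k + 1)‼ : ℝ)) * (n.choose k : ℝ) =
      1 / (2 * n + 1) := by
  have hint : ∀ k, IntervalIntegrable (fun u : ℝ => (1 - u ^ 2) ^ k) MeasureTheory.volume (-1) 1 :=
    fun k => (by fun_prop : Continuous fun u : ℝ => (1 - u ^ 2) ^ k).intervalIntegrable _ _
  refine mul_left_cancel₀ (two_ne_zero : (2 : ℝ) ≠ 0) ?_
  calc 2 * ∑ k ∈ range (n + 1), (-1 : ℝ) ^ k * (((2 * k)‼ : ℝ) / (2 * k + 1)‼) * (n.choose k : ℝ)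
      = ∑ k ∈ range (n + 1), ∫ u in (-1 : ℝ)..1, (-1) ^ k * (1 - u ^ 2) ^ k * (n.choose k : ℝ) := by
        rw [mul_sum]
        refine sum_congr rfl fun k _ => ?_
        rw [integral_mul_const, integral_const_mul, integral_one_sub_sq_pow]
        ring
    _ = ∫ u in (-1 : ℝ)..1, (u ^ 2) ^ n := by
        rw [← integral_finsetSum fun k _ => ((hint k).const_mul _).mul_const _]
        simp only [sum_range_neg_one_pow_mul_pow_mul_choose, sub_sub_cancel]
    _ = 2 * (1 / (2 * n + 1)) := by
        simp_rw [← pow_mul]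
        rw [integral_pow]
        push_cast
        rw [Odd.neg_one_pow ⟨n, by ring⟩]
        ring
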